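/- For GR-processes P, Q of a net N: P ⊑₁^∞ Q if and only if BD(P) ⊆ BD(Q), where BD(P) is the set of finite BD-approximations of P. Consequently P ≡₁^∞ Q iff BD(P) = BD(Q). -/

import Mathlib

/-- A place/transition net: places `S`, transitions `T`, flow relation given by
`pre t s = F(s,t)` and `post t s = F(t,s)`, and initial marking `M0`. Every
transition has a finite non-empty multiset of preplaces and a finite multiset
of postplaces. -/
structure Net where
  S : Type
  T : Type
  pre : T → S → ℕ
  post : T → S → ℕ
  M0 : S → ℕ
  pre_fin : ∀ t, (Function.support (pre t)).Finite
  pre_ne : ∀ t, ∃ s, 0 < pre t s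
  post_fin : ∀ t, (Function.support (post t)).Finite

namespace Net

/-- `•G`, the preset of a finite multiset of transitions. -/
def preStep (N : Net) (G : N.T →₀ ℕ) : N.S → ℕ := fun s => G.sum fun t n => n * N.pre t s

/-- `G•`, the postset of a finite multiset of transitions. -/
def postStep (N : Net) (G : N.T →₀ ℕ) : N.S → ℕ := fun s => G.sum fun t n => n * N.post t s

/-- `G` is enabled at marking `M` : `•G ⊆ M`. -/
def Enabled (N : Net) (M : N.S → ℕ) (G : N.T →₀ ℕ) : Prop := ∀ s, N.preStep G s ≤ M s

/-- `M —G→ M'` : the non-empty finite multiset `G` is a step from `M` to `M'`. -/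
def Step (N : Net) (M : N.S → ℕ) (G : N.T →₀ ℕ) (M' : N.S → ℕ) : Prop :=
  G ≠ 0 ∧ N.Enabled M G ∧ ∀ s, M' s = M s - N.preStep G s + N.postStep G s

/-- Firing a single transition. -/
def Fire (N : Net) (M : N.S → ℕ) (t : N.T) (M' : N.S → ℕ) : Prop :=
  N.Step M (Finsupp.single t 1) M'

/-- Markings reachable from the initial marking by firing single transitions. -/
def Reachable (N : Net) (M : N.S → ℕ) : Prop :=
  Relation.ReflTransGen (fun M₁ M₂ => ∃ t, N.Fire M₁ t M₂) N.M0 M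

/-- The finite non-empty multiset `G` is in semantic conflict at `M`. -/
def Conflict (N : Net) (M : N.S → ℕ) (G : N.T →₀ ℕ) : Prop :=
  G ≠ 0 ∧ ¬ N.Enabled M G ∧ ∀ t, 0 < G t → N.Enabled M (Finsupp.single t (G t))

def ConflictFree (N : Net) : Prop := ∀ M, N.Reachable M → ∀ G, ¬ N.Conflict M G

def BinaryConflictFree (N : Net) : Prop :=
  ∀ M, N.Reachable M → ∀ G : N.T →₀ ℕ, (G.sum fun _ n => n) = 2 → ¬ N.Conflict M G

/-- Structural conflict net: transitions occurring together in a step at a reachable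
marking have disjoint presets. -/
def StructuralConflictNet (N : Net) : Prop :=
  ∀ t u : N.T,
    (∃ M, N.Reachable M ∧ N.Enabled M (Finsupp.single t 1 + Finsupp.single u 1)) →
    ∀ s, min (N.pre t s) (N.pre u s) = 0

/-- A sufficiently large ambient type from which the places and transitions of
GR-processes of `N` are drawn. -/
def Amb (N : Net) : Type := Set (N.S ⊕ N.T ⊕ ℕ)

end Net
/-- Raw data of a (Goltz-Reisig) process over a net `N` : an occurrence net
with places `pl` and transitions `tr` (subsets of an ambient type), flow
`Fst` (place → transition) and `Fts` (transition → place), and the process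
mapping `piS`, `piT` into `N`. -/
structure RawProc (N : Net) where
  pl : Set N.Amb
  tr : Set N.Amb
  Fst : N.Amb → N.Amb → ℕ
  Fts : N.Amb → N.Amb → ℕ
  piS : N.Amb → N.S
  piT : N.Amb → N.T

namespace RawProc

variable {N : Net}

/-- The flow relation of the process (places tagged `inl`, transitions `inr`). -/
def rel (P : RawProc N) : (N.Amb ⊕ N.Amb) → (N.Amb ⊕ N.Amb) → Prop
  | Sum.inl x, Sum.inr t => 0 < P.Fst x t
  | Sum.inr t, Sum.inl x => 0 < P.Fts t x
  | _, _ => False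

/-- The causal order `ℱ⁺` of the process. -/
def causal (P : RawProc N) : (N.Amb ⊕ N.Amb) → (N.Amb ⊕ N.Amb) → Prop :=
  Relation.TransGen P.rel

/-- The initially marked places: those with empty preset. -/
def init (P : RawProc N) : Set N.Amb := {x | x ∈ P.pl ∧ ∀ t, P.Fts t x = 0}

/-- The end `P°` of the process: places with empty postset. -/
def ends (P : RawProc N) : Set N.Amb := {x | x ∈ P.pl ∧ ∀ t, P.Fst x t = 0}

/-- The marking `ĤP = π(P°)` of the underlying net reached at the end of `P`. -/
noncomputable def endMark (P : RawProc N) : N.S → ℕ :=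
  fun s => {x | x ∈ P.ends ∧ P.piS x = s}.ncard

/-- A process is finite iff its set of transitions is finite. -/
def FiniteP (P : RawProc N) : Prop := P.tr.Finite

open Classical in
/-- `swap P p q` : exchange the outgoing arcs of the places `p` and `q`. -/
noncomputable def swap (P : RawProc N) (p q : N.Amb) : RawProc N :=
  { P with Fst := fun x t => if x = p then P.Fst q t else if x = q then P.Fst p t else P.Fst x t }

end RawProc

/-- The conditions making a `RawProc` a GR-process of the net `N`. -/
structure IsProc (N : Net) (P : RawProc N) : Prop where
  fst_dom : ∀ x t, 0 < P.Fst x t → x ∈ P.pl ∧ t ∈ P.tr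
  fts_dom : ∀ t x, 0 < P.Fts t x → x ∈ P.pl ∧ t ∈ P.tr
  pre_unique : ∀ x t t', 0 < P.Fts t x → 0 < P.Fts t' x → t = t'
  pre_le_one : ∀ t x, P.Fts t x ≤ 1
  post_unique : ∀ x t t', 0 < P.Fst x t → 0 < P.Fst x t' → t = t'
  post_le_one : ∀ x t, P.Fst x t ≤ 1
  acyclic : ∀ z, ¬ P.causal z z
  finite_past : ∀ u ∈ P.tr, {t : N.Amb | P.causal (Sum.inr t) (Sum.inr u)}.Finite
  init_fin : ∀ s : N.S, {x | x ∈ P.init ∧ P.piS x = s}.Finite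
  init_marking : ∀ s : N.S, N.M0 s = {x | x ∈ P.init ∧ P.piS x = s}.ncard
  pre_fin : ∀ t ∈ P.tr, {x | 0 < P.Fst x t}.Finite
  post_fin : ∀ t ∈ P.tr, {x | 0 < P.Fts t x}.Finite
  pre_match : ∀ t ∈ P.tr, ∀ s : N.S, N.pre (P.piT t) s = ∑ᶠ x ∈ {x | P.piS x = s}, P.Fst x t
  post_match : ∀ t ∈ P.tr, ∀ s : N.S, N.post (P.piT t) s = ∑ᶠ x ∈ {x | P.piS x = s}, P.Fts t x

/-- `ProcPrefix N Q P` : `Q ≤ P`, i.e. `Q` is a prefix of the process `P`. -/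
def ProcPrefix (N : Net) (Q P : RawProc N) : Prop :=
  Q.pl ⊆ P.pl ∧ Q.tr ⊆ P.tr ∧
  (∀ x ∈ Q.pl, ∀ t ∈ Q.tr, Q.Fst x t = P.Fst x t ∧ Q.Fts t x = P.Fts t x) ∧
  (∀ x ∈ Q.pl, Q.piS x = P.piS x) ∧ (∀ t ∈ Q.tr, Q.piT t = P.piT t) ∧
  Q.init = P.init

/-- Isomorphism of processes: a bijection between places and between transitions
respecting the flow, the initial marking and the process mappings. -/
def Iso (N : Net) (P Q : RawProc N) : Prop :=
  ∃ fp ft : N.Amb → N.Amb,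
    Set.BijOn fp P.pl Q.pl ∧ Set.BijOn ft P.tr Q.tr ∧
    (∀ x ∈ P.pl, ∀ t ∈ P.tr,
      Q.Fst (fp x) (ft t) = P.Fst x t ∧ Q.Fts (ft t) (fp x) = P.Fts t x) ∧
    (∀ x ∈ P.pl, (x ∈ P.init ↔ fp x ∈ Q.init)) ∧
    (∀ x ∈ P.pl, Q.piS (fp x) = P.piS x) ∧ (∀ t ∈ P.tr, Q.piT (ft t) = P.piT t)

/-- `p` and `q` are causally unordered places with the same image, so they may be swapped. -/
def Swappable {N : Net} (P : RawProc N) (p q : N.Amb) : Prop :=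
  p ∈ P.pl ∧ q ∈ P.pl ∧ P.piS p = P.piS q ∧
  ¬ P.causal (Sum.inl p) (Sum.inl q) ∧ ¬ P.causal (Sum.inl q) (Sum.inl p)

/-- `P ∼__S Q` : `Q` is obtained from `P` by a single swap. -/
def SwapRel (N : Net) (P Q : RawProc N) : Prop :=
  ∃ p q, Swappable P p q ∧ Q = P.swap p q

/-- `P ≡₁ Q` : one-step swapping equivalence of GR-processes (swap followed by isomorphism). -/
def OneSwap (N : Net) (P Q : RawProc N) : Prop :=
  IsProc N P ∧ IsProc N Q ∧ ∃ p q, Swappable P p q ∧ Iso N (P.swap p q) Q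

/-- `P ≡₁* Q` : the reflexive-transitive closure of one-step swapping equivalence. -/
def SwapEqv (N : Net) : RawProc N → RawProc N → Prop :=
  Relation.ReflTransGen (OneSwap N)

/-- `P —a→ Q` : the process `Q` extends `P` by exactly one transition, labelled `a`. -/
def StepExt (N : Net) (P Q : RawProc N) (a : N.T) : Prop :=
  ProcPrefix N P Q ∧ ∃ t, t ∉ P.tr ∧ Q.tr = insert t P.tr ∧ Q.piT t = a

/-- `P ⊑₁^∞ Q` : every finite prefix `P''` of `P` satisfies
`P'' ≤ P' ≡₁* Q' ≤ Q` for some finite GR-processes `P'`, `Q'`. -/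
def SwapLe (N : Net) (P Q : RawProc N) : Prop :=
  ∀ P'' : RawProc N, IsProc N P'' → P''.FiniteP → ProcPrefix N P'' P →
    ∃ P' Q' : RawProc N, IsProc N P' ∧ P'.FiniteP ∧ IsProc N Q' ∧ Q'.FiniteP ∧
      ProcPrefix N P'' P' ∧ SwapEqv N P' Q' ∧ ProcPrefix N Q' Q

/-- `BDapprox N P` : the smallest set of finite GR-processes containing all finite
prefixes of `P` and closed under `≡₁` and under taking prefixes. -/
inductive BDapprox (N : Net) (P : RawProc N) : RawProc N → Prop
  | base (Q : RawProc N) : IsProc N Q → Q.FiniteP → ProcPrefix N Q P → BDapprox N P Q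
  | swapc (Q R : RawProc N) :
      BDapprox N P R → IsProc N Q → Q.FiniteP → OneSwap N Q R → BDapprox N P Q
  | prefc (Q R : RawProc N) :
      BDapprox N P R → IsProc N Q → Q.FiniteP → ProcPrefix N Q R → BDapprox N P Q


section Aux

open RawProc Relation Sum

variable {N : Net}

lemma prefix_refl (P : RawProc N) : ProcPrefix N P P :=
  ⟨le_refl _, le_refl _, fun _ _ _ _ => ⟨rfl, rfl⟩, fun _ _ => rfl, fun _ _ => rfl, rfl⟩

lemma prefix_trans {A B C : RawProc N} (h1 : ProcPrefix N A B) (h2 : ProcPrefix N B C) :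
    ProcPrefix N A C := by
  obtain ⟨hpl1, htr1, hf1, hs1, ht1, hi1⟩ := h1
  obtain ⟨hpl2, htr2, hf2, hs2, ht2, hi2⟩ := h2
  refine ⟨hpl1.trans hpl2, htr1.trans htr2, ?_, ?_, ?_, hi1.trans hi2⟩
  · intro x hx t ht
    obtain ⟨e1, e2⟩ := hf1 x hx t ht
    obtain ⟨e3, e4⟩ := hf2 x (hpl1 hx) t (htr1 ht)
    exact ⟨e1.trans e3, e2.trans e4⟩
  · intro x hx; exact (hs1 x hx).trans (hs2 x (hpl1 hx))
  · intro t ht; exact (ht1 t ht).trans (ht2 t (htr1 ht))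

lemma iso_refl (P : RawProc N) : Iso N P P :=
  ⟨id, id, Set.bijOn_id _, Set.bijOn_id _, fun _ _ _ _ => ⟨rfl, rfl⟩,
    fun _ _ => Iff.rfl, fun _ _ => rfl, fun _ _ => rfl⟩

open scoped Classical in
lemma swap_Fst (P : RawProc N) (p q x : N.Amb) (t : N.Amb) :
    (P.swap p q).Fst x t = P.Fst (Equiv.swap p q x) t := by
  simp only [RawProc.swap, Equiv.swap_apply_def]
  split_ifs <;> rfl

@[simp] lemma swap_Fts (P : RawProc N) (p q : N.Amb) : (P.swap p q).Fts = P.Fts := rfl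
@[simp] lemma swap_pl (P : RawProc N) (p q : N.Amb) : (P.swap p q).pl = P.pl := rfl
@[simp] lemma swap_tr (P : RawProc N) (p q : N.Amb) : (P.swap p q).tr = P.tr := rfl
@[simp] lemma swap_piS (P : RawProc N) (p q : N.Amb) : (P.swap p q).piS = P.piS := rfl
@[simp] lemma swap_piT (P : RawProc N) (p q : N.Amb) : (P.swap p q).piT = P.piT := rfl
@[simp] lemma swap_init (P : RawProc N) (p q : N.Amb) : (P.swap p q).init = P.init := rfl

lemma swap_swap (P : RawProc N) (p q : N.Amb) : (P.swap p q).swap p q = P := by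
  obtain ⟨pl, tr, Fst, Fts, piS, piT⟩ := P
  simp only [RawProc.swap]
  congr 1
  funext x t
  by_cases h1 : x = p <;> by_cases h2 : x = q <;> simp [h1, h2] <;> (intros; simp_all)

lemma swap_self (P : RawProc N) (p : N.Amb) : P.swap p p = P := by
  obtain ⟨pl, tr, Fst, Fts, piS, piT⟩ := P
  simp only [RawProc.swap]
  congr 1
  funext x t
  by_cases h1 : x = p <;> simp [h1]


open scoped Classical in
lemma swap_rel {P : RawProc N} {p q : N.Amb} {z w : N.Amb ⊕ N.Amb}
    (h : (P.swap p q).rel z w) :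
    P.rel (Equiv.swap (Sum.inl p : N.Amb ⊕ N.Amb) (Sum.inl q) z) w := by
  match z, w with
  | Sum.inl x, Sum.inr t =>
    have h' : 0 < P.Fst (Equiv.swap p q x) t := by
      rw [← swap_Fst]; exact h
    rw [show (Equiv.swap (Sum.inl p : N.Amb ⊕ N.Amb) (Sum.inl q)) (Sum.inl x)
        = Sum.inl (Equiv.swap p q x) by
        rw [Equiv.swap_apply_def, Equiv.swap_apply_def]
        split_ifs with e1 e2 <;> simp_all]
    exact h'
  | Sum.inr t, Sum.inl x =>
    rw [Equiv.swap_apply_of_ne_of_ne (by simp) (by simp)]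
    exact h
  | Sum.inl _, Sum.inl _ => exact h.elim
  | Sum.inr _, Sum.inr _ => exact h.elim

open scoped Classical in
/-- Lemma T : causality in the swapped process, tracked from the source. -/
lemma swap_causal_T {P : RawProc N} {p q : N.Amb} {z w : N.Amb ⊕ N.Amb}
    (h : (P.swap p q).causal z w) :
    P.causal (Equiv.swap (Sum.inl p : N.Amb ⊕ N.Amb) (Sum.inl q) z) w ∨
      P.causal (Sum.inl p) w ∨ P.causal (Sum.inl q) w := by
  induction h using Relation.TransGen.head_induction_on with
  | single hr => exact Or.inl (Relation.TransGen.single (swap_rel hr))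
  | head hr hcw ih =>
    rename_i a c
    have hac : P.rel (Equiv.swap (Sum.inl p : N.Amb ⊕ N.Amb) (Sum.inl q) a) c := swap_rel hr
    by_cases hc1 : c = Sum.inl p
    · subst hc1
      rcases ih with h' | h' | h'
      · rw [Equiv.swap_apply_left] at h'; exact Or.inr (Or.inr h')
      · exact Or.inr (Or.inl h')
      · exact Or.inr (Or.inr h')
    · by_cases hc2 : c = Sum.inl q
      · subst hc2
        rcases ih with h' | h' | h'
        · rw [Equiv.swap_apply_right] at h'; exact Or.inr (Or.inl h')
        · exact Or.inr (Or.inl h')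
        · exact Or.inr (Or.inr h')
      · rw [show Equiv.swap (Sum.inl p : N.Amb ⊕ N.Amb) (Sum.inl q) c = c from
          Equiv.swap_apply_of_ne_of_ne hc1 hc2] at ih
        rcases ih with h' | h' | h'
        · exact Or.inl (Relation.TransGen.head hac h')
        · exact Or.inr (Or.inl h')
        · exact Or.inr (Or.inr h')

open scoped Classical in
/-- Lemma T' : causality in the swapped process, tracked from the target. -/
lemma swap_causal_T' {P : RawProc N} {p q : N.Amb} {z w : N.Amb ⊕ N.Amb}
    (h : (P.swap p q).causal z w) :
    P.causal (Equiv.swap (Sum.inl p : N.Amb ⊕ N.Amb) (Sum.inl q) z) w ∨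
      P.causal (Equiv.swap (Sum.inl p : N.Amb ⊕ N.Amb) (Sum.inl q) z) (Sum.inl p) ∨
      P.causal (Equiv.swap (Sum.inl p : N.Amb ⊕ N.Amb) (Sum.inl q) z) (Sum.inl q) := by
  induction h with
  | single hr => exact Or.inl (Relation.TransGen.single (swap_rel hr))
  | tail hc hr ih =>
    rename_i b c
    have hbc : P.rel (Equiv.swap (Sum.inl p : N.Amb ⊕ N.Amb) (Sum.inl q) b) c := swap_rel hr
    rcases ih with h' | h' | h'
    · by_cases hb1 : b = Sum.inl p
      · subst hb1; exact Or.inr (Or.inl h')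
      · by_cases hb2 : b = Sum.inl q
        · subst hb2; exact Or.inr (Or.inr h')
        · rw [show Equiv.swap (Sum.inl p : N.Amb ⊕ N.Amb) (Sum.inl q) b = b from
            Equiv.swap_apply_of_ne_of_ne hb1 hb2] at hbc
          exact Or.inl (Relation.TransGen.tail h' hbc)
    · exact Or.inr (Or.inl h')
    · exact Or.inr (Or.inr h')

lemma not_causal_of_swappable {P : RawProc N} (hP : IsProc N P) {p q : N.Amb}
    (hsw : Swappable P p q) :
    ∀ a b : N.Amb, a ∈ ({p, q} : Set N.Amb) → b ∈ ({p, q} : Set N.Amb) →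
      ¬ P.causal (Sum.inl a) (Sum.inl b) := by
  rintro a b (rfl | rfl) (rfl | rfl)
  · exact hP.acyclic _
  · exact hsw.2.2.2.1
  · exact hsw.2.2.2.2
  · exact hP.acyclic _

open scoped Classical in
lemma swap_not_causal {P : RawProc N} (hP : IsProc N P) {p q : N.Amb}
    (hsw : Swappable P p q) {a b : N.Amb} (ha : a ∈ ({p, q} : Set N.Amb))
    (hb : b ∈ ({p, q} : Set N.Amb)) :
    ¬ (P.swap p q).causal (Sum.inl a) (Sum.inl b) := by
  intro h
  have H := not_causal_of_swappable hP hsw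
  have ha' : Equiv.swap (Sum.inl p : N.Amb ⊕ N.Amb) (Sum.inl q) (Sum.inl a) = Sum.inl p ∨
      Equiv.swap (Sum.inl p : N.Amb ⊕ N.Amb) (Sum.inl q) (Sum.inl a) = Sum.inl q := by
    rcases ha with rfl | rfl
    · rw [Equiv.swap_apply_left]; exact Or.inr rfl
    · rw [Equiv.swap_apply_right]; exact Or.inl rfl
  rcases swap_causal_T h with h' | h' | h'
  · rcases ha' with e | e <;> rw [e] at h'
    · exact H p b (by simp) hb h'
    · exact H q b (by simp) hb h'
  · exact H p b (by simp) hb h'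
  · exact H q b (by simp) hb h'

open scoped Classical in
lemma swap_acyclic {P : RawProc N} (hP : IsProc N P) {p q : N.Amb}
    (hsw : Swappable P p q) : ∀ z, ¬ (P.swap p q).causal z z := by
  intro z h
  have H := not_causal_of_swappable hP hsw
  by_cases h1 : z = Sum.inl p
  · subst h1; exact swap_not_causal hP hsw (by simp) (by simp) h
  by_cases h2 : z = Sum.inl q
  · subst h2; exact swap_not_causal hP hsw (by simp) (by simp) h
  have hz : Equiv.swap (Sum.inl p : N.Amb ⊕ N.Amb) (Sum.inl q) z = z :=
    Equiv.swap_apply_of_ne_of_ne h1 h2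
  rcases swap_causal_T h with hT | hT | hT
  · rw [hz] at hT; exact hP.acyclic _ hT
  · rcases swap_causal_T' h with hT' | hT' | hT' <;> rw [hz] at hT'
    · exact hP.acyclic _ hT'
    · exact hP.acyclic _ (Relation.TransGen.trans hT hT')
    · exact H p q (by simp) (by simp) (Relation.TransGen.trans hT hT')
  · rcases swap_causal_T' h with hT' | hT' | hT' <;> rw [hz] at hT'
    · exact hP.acyclic _ hT'
    · exact H q p (by simp) (by simp) (Relation.TransGen.trans hT hT')
    · exact hP.acyclic _ (Relation.TransGen.trans hT hT')

open scoped Classical in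
lemma swappable_swap {P : RawProc N} (hP : IsProc N P) {p q : N.Amb}
    (hsw : Swappable P p q) : Swappable (P.swap p q) p q :=
  ⟨hsw.1, hsw.2.1, hsw.2.2.1,
    swap_not_causal hP hsw (by simp) (by simp),
    swap_not_causal hP hsw (by simp) (by simp)⟩

lemma causal_to_place {P : RawProc N} {z : N.Amb ⊕ N.Amb} {x : N.Amb}
    (h : P.causal z (Sum.inl x)) :
    ∃ t, 0 < P.Fts t x ∧ (z = Sum.inr t ∨ P.causal z (Sum.inr t)) := by
  cases h with
  | single hr =>
    match z, hr with
    | Sum.inr t, hr => exact ⟨t, hr, Or.inl rfl⟩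
  | tail hc hr =>
    rename_i b
    match b, hr with
    | Sum.inr t, hr => exact ⟨t, hr, Or.inr hc⟩

lemma place_past_finite {P : RawProc N} (hP : IsProc N P) (x : N.Amb) :
    {t | P.causal (Sum.inr t) (Sum.inl x)}.Finite := by
  by_cases hex : ∃ t0, 0 < P.Fts t0 x
  · obtain ⟨t0, ht0⟩ := hex
    have ht0tr : t0 ∈ P.tr := (hP.fts_dom t0 x ht0).2
    apply Set.Finite.subset ((hP.finite_past t0 ht0tr).insert t0)
    intro t ht
    obtain ⟨t', h1, h2⟩ := causal_to_place ht
    have he : t' = t0 := hP.pre_unique x t' t0 h1 ht0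
    subst he
    rcases h2 with h2 | h2
    · simp at h2; simp [h2]
    · exact Set.mem_insert_iff.2 (Or.inr h2)
  · convert Set.finite_empty
    ext t; simp only [Set.mem_setOf_eq, Set.mem_empty_iff_false, iff_false]
    intro h
    obtain ⟨t', h1, _⟩ := causal_to_place h
    exact hex ⟨t', h1⟩

open scoped Classical in
lemma isProc_swap {P : RawProc N} (hP : IsProc N P) {p q : N.Amb}
    (hsw : Swappable P p q) : IsProc N (P.swap p q) := by
  have hp := hsw.1
  have hq := hsw.2.1
  have hpi := hsw.2.2.1
  have hmem : ∀ x : N.Amb, Equiv.swap p q x ∈ P.pl → x ∈ P.pl := by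
    intro x hx
    by_cases h1 : x = p
    · subst h1; exact hp
    by_cases h2 : x = q
    · subst h2; exact hq
    rwa [Equiv.swap_apply_of_ne_of_ne h1 h2] at hx
  have hmemS : ∀ s : N.S, ∀ x : N.Amb, P.piS x = s → P.piS (Equiv.swap p q x) = s := by
    intro s x hx
    by_cases h1 : x = p
    · subst h1; rw [Equiv.swap_apply_left, ← hpi]; exact hx
    by_cases h2 : x = q
    · subst h2; rw [Equiv.swap_apply_right, hpi]; exact hx
    rwa [Equiv.swap_apply_of_ne_of_ne h1 h2]
  refine ⟨?_, hP.fts_dom, hP.pre_unique, hP.pre_le_one, ?_, ?_, ?_, ?_,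
    hP.init_fin, hP.init_marking, ?_, hP.post_fin, ?_, hP.post_match⟩
  · -- fst_dom
    intro x t h
    rw [swap_Fst] at h
    obtain ⟨h1, h2⟩ := hP.fst_dom _ t h
    exact ⟨hmem x h1, h2⟩
  · -- post_unique
    intro x t t' h h'
    rw [swap_Fst] at h h'
    exact hP.post_unique _ t t' h h'
  · -- post_le_one
    intro x t
    rw [swap_Fst]
    exact hP.post_le_one _ t
  · -- acyclic
    exact swap_acyclic hP hsw
  · -- finite_past
    intro u hu
    apply Set.Finite.subset
      (((hP.finite_past u hu).union (place_past_finite hP p)).union (place_past_finite hP q))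
    intro t ht
    rcases swap_causal_T' ht with h' | h' | h' <;>
      rw [show Equiv.swap (Sum.inl p : N.Amb ⊕ N.Amb) (Sum.inl q) (Sum.inr t) = Sum.inr t from
        Equiv.swap_apply_of_ne_of_ne (by simp) (by simp)] at h'
    · exact Or.inl (Or.inl h')
    · exact Or.inl (Or.inr h')
    · exact Or.inr h'
  · -- pre_fin
    intro t ht
    apply Set.Finite.subset (((hP.pre_fin t ht).insert p).insert q)
    intro x hx
    rw [Set.mem_setOf_eq, swap_Fst] at hx
    by_cases h1 : x = p
    · simp [h1]
    by_cases h2 : x = q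
    · simp [h2]
    rw [Equiv.swap_apply_of_ne_of_ne h1 h2] at hx
    exact Set.mem_insert_iff.2 (Or.inr (Set.mem_insert_iff.2 (Or.inr hx)))
  · -- pre_match
    intro t ht s
    have := hP.pre_match t ht s
    rw [show (P.swap p q).piT = P.piT from rfl,
      show (P.swap p q).piS = P.piS from rfl, this]
    refine (finsum_mem_eq_of_bijOn (Equiv.swap p q) ?_ ?_).symm
    · refine ⟨fun x hx => hmemS s x hx, (Equiv.swap p q).injective.injOn, ?_⟩
      intro y hy
      exact ⟨Equiv.swap p q y, hmemS s y hy, Equiv.swap_apply_self p q y⟩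
    · intro x _
      rw [swap_Fst]

lemma prefix_fst_closed {R' X : RawProc N} (hR' : IsProc N R') (hX : IsProc N X)
    (hpre : ProcPrefix N R' X) {t x : N.Amb} (ht : t ∈ R'.tr) (h : 0 < X.Fst x t) :
    x ∈ R'.pl ∧ 0 < R'.Fst x t := by
  by_cases hx : x ∈ R'.pl
  · refine ⟨hx, ?_⟩
    rw [(hpre.2.2.1 x hx t ht).1]
    exact h
  exfalso
  set s := X.piS x with hs
  have htX : t ∈ X.tr := hpre.2.1 ht
  have e1 := hX.pre_match t htX s
  have e2 := hR'.pre_match t ht s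
  rw [hpre.2.2.2.2.1 t ht] at e2
  set fX : N.Amb → ℕ := fun y => X.Fst y t with hfXdef
  set fR : N.Amb → ℕ := fun y => R'.Fst y t with hfRdef
  have hfX : ({y | X.piS y = s} ∩ Function.support fX).Finite :=
    (hX.pre_fin t htX).subset (fun y hy => Nat.pos_of_ne_zero hy.2)
  have hfR : ({y | R'.piS y = s} ∩ Function.support fR).Finite :=
    (hR'.pre_fin t ht).subset (fun y hy => Nat.pos_of_ne_zero hy.2)
  rw [finsum_mem_eq_sum fX hfX] at e1
  rw [finsum_mem_eq_sum fR hfR] at e2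
  have hpl_of : ∀ y, fR y ≠ 0 → y ∈ R'.pl := fun y hy =>
    (hR'.fst_dom y t (Nat.pos_of_ne_zero hy)).1
  have hsub : hfR.toFinset ⊆ hfX.toFinset := by
    intro y hy
    rw [Set.Finite.mem_toFinset] at hy ⊢
    have hypl : y ∈ R'.pl := hpl_of y hy.2
    refine ⟨?_, ?_⟩
    · rw [Set.mem_setOf_eq, ← hpre.2.2.2.1 y hypl]; exact hy.1
    · show fX y ≠ 0
      have : fR y = fX y := (hpre.2.2.1 y hypl t ht).1
      rw [← this]; exact hy.2
  have hcong : ∀ y ∈ hfR.toFinset, fR y = fX y := by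
    intro y hy
    rw [Set.Finite.mem_toFinset] at hy
    exact (hpre.2.2.1 y (hpl_of y hy.2) t ht).1
  have hxin : x ∈ hfX.toFinset := by
    rw [Set.Finite.mem_toFinset]
    exact ⟨rfl, Nat.pos_iff_ne_zero.1 h⟩
  have hxout : x ∉ hfR.toFinset := by
    rw [Set.Finite.mem_toFinset]
    intro hy
    exact hx (hpl_of x hy.2)
  have hlt : ∑ y ∈ hfR.toFinset, fR y < ∑ y ∈ hfX.toFinset, fX y := by
    rw [Finset.sum_congr rfl hcong]
    exact Finset.sum_lt_sum_of_subset hsub hxin hxout h (fun _ _ _ => Nat.zero_le _)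
  rw [← e1, ← e2] at hlt
  exact lt_irrefl _ hlt

lemma prefix_fts_closed {R' X : RawProc N} (hR' : IsProc N R') (hX : IsProc N X)
    (hpre : ProcPrefix N R' X) {t x : N.Amb} (hx : x ∈ R'.pl) (h : 0 < X.Fts t x) :
    t ∈ R'.tr ∧ 0 < R'.Fts t x := by
  by_cases hex : ∃ t0, 0 < R'.Fts t0 x
  · obtain ⟨t0, ht0⟩ := hex
    have ht0tr : t0 ∈ R'.tr := (hR'.fts_dom t0 x ht0).2
    have heq : R'.Fts t0 x = X.Fts t0 x := (hpre.2.2.1 x hx t0 ht0tr).2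
    have ht0X : 0 < X.Fts t0 x := heq ▸ ht0
    have : t = t0 := hX.pre_unique x t t0 h ht0X
    subst this
    exact ⟨ht0tr, ht0⟩
  · exfalso
    push_neg at hex
    have hinit : x ∈ R'.init := ⟨hx, fun t' => Nat.eq_zero_of_not_pos (by
      intro hc; exact absurd hc (by simpa using hex t'))⟩
    rw [hpre.2.2.2.2.2] at hinit
    rw [hinit.2 t] at h
    exact lt_irrefl 0 h

/-- membership of a node of the flow graph in a process. -/
def InProc (R' : RawProc N) : N.Amb ⊕ N.Amb → Prop
  | Sum.inl x => x ∈ R'.pl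
  | Sum.inr t => t ∈ R'.tr

lemma prefix_rel_closed {R' X : RawProc N} (hR' : IsProc N R') (hX : IsProc N X)
    (hpre : ProcPrefix N R' X) {y w : N.Amb ⊕ N.Amb} (h : X.rel y w) (hw : InProc R' w) :
    InProc R' y ∧ R'.rel y w := by
  match y, w, h with
  | Sum.inl x, Sum.inr t, h =>
    obtain ⟨h1, h2⟩ := prefix_fst_closed hR' hX hpre hw h
    exact ⟨h1, h2⟩
  | Sum.inr t, Sum.inl x, h =>
    obtain ⟨h1, h2⟩ := prefix_fts_closed hR' hX hpre hw h
    exact ⟨h1, h2⟩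

lemma prefix_causal_closed {R' X : RawProc N} (hR' : IsProc N R') (hX : IsProc N X)
    (hpre : ProcPrefix N R' X) {z w : N.Amb ⊕ N.Amb} (h : X.causal z w) (hw : InProc R' w) :
    InProc R' z ∧ R'.causal z w := by
  induction h with
  | single hr =>
    obtain ⟨h1, h2⟩ := prefix_rel_closed hR' hX hpre hr hw
    exact ⟨h1, Relation.TransGen.single h2⟩
  | tail hc hr ih =>
    obtain ⟨h1, h2⟩ := prefix_rel_closed hR' hX hpre hr hw
    obtain ⟨h3, h4⟩ := ih h1
    exact ⟨h3, Relation.TransGen.tail h4 h2⟩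

/-- Renaming the places and transitions of a raw process along two permutations
of the ambient type. -/
def rename (σS σT : N.Amb ≃ N.Amb) (X : RawProc N) : RawProc N where
  pl := ⇑σS '' X.pl
  tr := ⇑σT '' X.tr
  Fst := fun x t => X.Fst (σS.symm x) (σT.symm t)
  Fts := fun t x => X.Fts (σT.symm t) (σS.symm x)
  piS := fun x => X.piS (σS.symm x)
  piT := fun t => X.piT (σT.symm t)

lemma rename_causal {σS σT : N.Amb ≃ N.Amb} {X : RawProc N} {z w : N.Amb ⊕ N.Amb}
    (h : (rename σS σT X).causal z w) :
    X.causal (Sum.map ⇑σS.symm ⇑σT.symm z) (Sum.map ⇑σS.symm ⇑σT.symm w) := by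
  have hrel : ∀ a b : N.Amb ⊕ N.Amb, (rename σS σT X).rel a b →
      X.rel (Sum.map ⇑σS.symm ⇑σT.symm a) (Sum.map ⇑σS.symm ⇑σT.symm b) := by
    intro a b hab
    match a, b, hab with
    | Sum.inl x, Sum.inr t, hab => exact hab
    | Sum.inr t, Sum.inl x, hab => exact hab
  induction h with
  | single hr => exact Relation.TransGen.single (hrel _ _ hr)
  | tail hc hr ih => exact Relation.TransGen.tail ih (hrel _ _ hr)

lemma rename_init (σS σT : N.Amb ≃ N.Amb) (X : RawProc N) :
    (rename σS σT X).init = ⇑σS '' X.init := by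
  ext x
  rw [Set.mem_image_equiv]
  constructor
  · rintro ⟨h1, h2⟩
    rw [show (rename σS σT X).pl = ⇑σS '' X.pl from rfl, Set.mem_image_equiv] at h1
    refine ⟨h1, fun t' => ?_⟩
    have h3 : X.Fts (σT.symm (σT t')) (σS.symm x) = 0 := h2 (σT t')
    simpa using h3
  · rintro ⟨h1, h2⟩
    refine ⟨?_, fun t => h2 (σT.symm t)⟩
    rw [show (rename σS σT X).pl = ⇑σS '' X.pl from rfl, Set.mem_image_equiv]
    exact h1

lemma isProc_rename {X : RawProc N} (hX : IsProc N X) (σS σT : N.Amb ≃ N.Amb) :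
    IsProc N (rename σS σT X) := by
  have hinitset : ∀ s : N.S, {x | x ∈ (rename σS σT X).init ∧ (rename σS σT X).piS x = s}
      = ⇑σS '' {y | y ∈ X.init ∧ X.piS y = s} := by
    intro s
    ext x
    rw [Set.mem_image_equiv, Set.mem_setOf_eq, Set.mem_setOf_eq, rename_init,
      Set.mem_image_equiv]
    exact Iff.rfl
  refine ⟨?_, ?_, ?_, ?_, ?_, ?_, ?_, ?_, ?_, ?_, ?_, ?_, ?_, ?_⟩
  · intro x t h
    obtain ⟨h1, h2⟩ := hX.fst_dom _ _ h
    exact ⟨Set.mem_image_equiv.2 h1, Set.mem_image_equiv.2 h2⟩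
  · intro t x h
    obtain ⟨h1, h2⟩ := hX.fts_dom _ _ h
    exact ⟨Set.mem_image_equiv.2 h1, Set.mem_image_equiv.2 h2⟩
  · intro x t t' h h'
    have := hX.pre_unique _ _ _ h h'
    exact σT.symm.injective this
  · intro t x; exact hX.pre_le_one _ _
  · intro x t t' h h'
    have := hX.post_unique _ _ _ h h'
    exact σT.symm.injective this
  · intro x t; exact hX.post_le_one _ _
  · intro z h
    exact hX.acyclic _ (rename_causal h)
  · intro u hu
    have huX : σT.symm u ∈ X.tr := Set.mem_image_equiv.1 hu
    apply Set.Finite.subset ((hX.finite_past _ huX).image ⇑σT)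
    intro t ht
    have := rename_causal ht
    exact ⟨σT.symm t, this, by simp⟩
  · intro s
    rw [hinitset s]
    exact (hX.init_fin s).image _
  · intro s
    rw [hinitset s, Set.ncard_image_of_injective _ σS.injective]
    exact hX.init_marking s
  · intro t ht
    have htX : σT.symm t ∈ X.tr := Set.mem_image_equiv.1 ht
    apply Set.Finite.subset ((hX.pre_fin _ htX).image ⇑σS)
    intro x hx
    exact ⟨σS.symm x, hx, by simp⟩
  · intro t ht
    have htX : σT.symm t ∈ X.tr := Set.mem_image_equiv.1 ht
    apply Set.Finite.subset ((hX.post_fin _ htX).image ⇑σS)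
    intro x hx
    exact ⟨σS.symm x, hx, by simp⟩
  · intro t ht s
    have htX : σT.symm t ∈ X.tr := Set.mem_image_equiv.1 ht
    have e := hX.pre_match _ htX s
    rw [show (rename σS σT X).piT t = X.piT (σT.symm t) from rfl, e]
    refine finsum_mem_eq_of_bijOn ⇑σS ?_ ?_
    · refine ⟨fun y hy => ?_, σS.injective.injOn, fun x hx => ⟨σS.symm x, hx, by simp⟩⟩
      show (rename σS σT X).piS (σS y) = s
      show X.piS (σS.symm (σS y)) = s
      simpa using hy
    · intro y _
      show X.Fst y (σT.symm t) = X.Fst (σS.symm (σS y)) (σT.symm t)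
      simp
  · intro t ht s
    have htX : σT.symm t ∈ X.tr := Set.mem_image_equiv.1 ht
    have e := hX.post_match _ htX s
    rw [show (rename σS σT X).piT t = X.piT (σT.symm t) from rfl, e]
    refine finsum_mem_eq_of_bijOn ⇑σS ?_ ?_
    · refine ⟨fun y hy => ?_, σS.injective.injOn, fun x hx => ⟨σS.symm x, hx, by simp⟩⟩
      show X.piS (σS.symm (σS y)) = s
      simpa using hy
    · intro y _
      show X.Fts (σT.symm t) y = X.Fts (σT.symm t) (σS.symm (σS y))
      simp

lemma rename_finite {X : RawProc N} (hX : X.FiniteP) (σS σT : N.Amb ≃ N.Amb) :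
    (rename σS σT X).FiniteP := hX.image _

lemma iso_rename (σS σT : N.Amb ≃ N.Amb) (X : RawProc N) : Iso N (rename σS σT X) X := by
  refine ⟨⇑σS.symm, ⇑σT.symm, ?_, ?_, ?_, ?_, ?_, ?_⟩
  · refine ⟨fun x hx => Set.mem_image_equiv.1 hx, σS.symm.injective.injOn, fun y hy => ?_⟩
    exact ⟨σS y, ⟨y, hy, rfl⟩, by simp⟩
  · refine ⟨fun t ht => Set.mem_image_equiv.1 ht, σT.symm.injective.injOn, fun u hu => ?_⟩
    exact ⟨σT u, ⟨u, hu, rfl⟩, by simp⟩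
  · intro x _ t _; exact ⟨rfl, rfl⟩
  · intro x _
    rw [rename_init, Set.mem_image_equiv]
  · intro x _; rfl
  · intro t _; rfl

open scoped Classical in
/-- Extend a bijection between two subsets (with equinumerous complements) to a
permutation of the whole type. -/
noncomputable def extEquiv {α : Type} (s t : Set α) (e : ↥s ≃ ↥t) (f : ↥sᶜ ≃ ↥tᶜ) : α ≃ α :=
  (Equiv.Set.sumCompl s).symm.trans ((e.sumCongr f).trans (Equiv.Set.sumCompl t))

open scoped Classical in
lemma extEquiv_apply_mem {α : Type} {s t : Set α} (e : ↥s ≃ ↥t) (f : ↥sᶜ ≃ ↥tᶜ)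
    {y : α} (h : y ∈ s) : extEquiv s t e f y = ↑(e ⟨y, h⟩) := by
  simp only [extEquiv, Equiv.trans_apply]
  rw [Equiv.Set.sumCompl_symm_apply_of_mem h]
  rfl

open scoped Classical in
lemma extEquiv_symm_apply_mem {α : Type} {s t : Set α} (e : ↥s ≃ ↥t) (f : ↥sᶜ ≃ ↥tᶜ)
    {y : α} (h : y ∈ t) : (extEquiv s t e f).symm y = ↑(e.symm ⟨y, h⟩) := by
  simp only [extEquiv, Equiv.symm_trans_apply, Equiv.symm_symm]
  rw [Equiv.Set.sumCompl_symm_apply_of_mem h]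
  rfl

lemma exists_perm_extend {α : Type} [Infinite α] {s t : Set α}
    (hs : Cardinal.mk ↥s < Cardinal.mk α) (ht : Cardinal.mk ↥t < Cardinal.mk α)
    (e : ↥s ≃ ↥t) :
    ∃ σ : α ≃ α, (∀ y (h : y ∈ s), σ y = ↑(e ⟨y, h⟩)) ∧
      (∀ y (h : y ∈ t), σ.symm y = ↑(e.symm ⟨y, h⟩)) := by
  have h1 : Cardinal.mk ↥sᶜ = Cardinal.mk α := Cardinal.mk_compl_of_infinite s hs
  have h2 : Cardinal.mk ↥tᶜ = Cardinal.mk α := Cardinal.mk_compl_of_infinite t ht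
  obtain ⟨f⟩ := Cardinal.eq.1 (h1.trans h2.symm)
  exact ⟨extEquiv s t e f, fun y h => extEquiv_apply_mem e f h,
    fun y h => extEquiv_symm_apply_mem e f h⟩

lemma amb_infinite (N : Net) : Infinite N.Amb :=
  Infinite.of_injective (fun n : ℕ => ({Sum.inr (Sum.inr n)} : Set (N.S ⊕ N.T ⊕ ℕ)))
    (fun a b hab => by
      have := Set.singleton_eq_singleton_iff.1 hab
      simpa using this)

lemma finite_small {α : Type} [Infinite α] {s : Set α} (hs : s.Finite) :
    Cardinal.mk ↥s < Cardinal.mk α := by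
  have : Cardinal.mk ↥s < Cardinal.aleph0 := by
    have := hs.to_subtype
    exact Cardinal.lt_aleph0_of_finite ↥s
  exact lt_of_lt_of_le this (Cardinal.aleph0_le_mk α)

lemma pl_small {P : RawProc N} (hP : IsProc N P) (hfin : P.FiniteP) :
    Cardinal.mk ↥P.pl < Cardinal.mk N.Amb := by
  classical
  set κ := Cardinal.mk (N.S ⊕ N.T ⊕ ℕ) with hκ
  have hκinf : Cardinal.aleph0 ≤ κ := by
    have : Cardinal.aleph0 = Cardinal.mk ℕ := Cardinal.mk_nat.symm
    rw [this]
    exact Cardinal.mk_le_of_injective (f := fun n : ℕ => (Sum.inr (Sum.inr n) : N.S ⊕ N.T ⊕ ℕ))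
      (fun a b hab => by simpa using hab)
  have hAmb : Cardinal.mk N.Amb = 2 ^ κ := Cardinal.mk_set
  -- P.pl is contained in a union of small pieces
  have hsub : P.pl ⊆ (⋃ s : N.S, {x | x ∈ P.init ∧ P.piS x = s}) ∪
      (⋃ t : ↥P.tr, {x | 0 < P.Fts (↑t) x}) := by
    intro x hx
    by_cases hex : ∃ t, 0 < P.Fts t x
    · obtain ⟨t, ht⟩ := hex
      exact Or.inr (Set.mem_iUnion.2 ⟨⟨t, (hP.fts_dom t x ht).2⟩, ht⟩)
    · push_neg at hex
      refine Or.inl (Set.mem_iUnion.2 ⟨P.piS x, ⟨⟨hx, fun t => Nat.eq_zero_of_not_pos (by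
        have := hex t; omega)⟩, rfl⟩⟩)
  have hb1 : Cardinal.mk ↥(⋃ s : N.S, {x | x ∈ P.init ∧ P.piS x = s}) ≤ κ := by
    refine le_trans (Cardinal.mk_iUnion_le _) ?_
    have hS : Cardinal.mk N.S ≤ κ :=
      Cardinal.mk_le_of_injective (f := fun s : N.S => (Sum.inl s : N.S ⊕ N.T ⊕ ℕ))
        (fun a b hab => by simpa using hab)
    have hsup : (⨆ s : N.S, Cardinal.mk ↥{x | x ∈ P.init ∧ P.piS x = s}) ≤ Cardinal.aleph0 := by
      apply ciSup_le'
      intro s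
      have := (hP.init_fin s).to_subtype
      exact le_of_lt (Cardinal.lt_aleph0_of_finite _)
    calc Cardinal.mk N.S * (⨆ s : N.S, Cardinal.mk ↥{x | x ∈ P.init ∧ P.piS x = s})
        ≤ κ * Cardinal.aleph0 := mul_le_mul' hS hsup
      _ ≤ κ * κ := mul_le_mul' (le_refl κ) hκinf
      _ = κ := Cardinal.mul_eq_self hκinf
  have hb2 : Cardinal.mk ↥(⋃ t : ↥P.tr, {x | 0 < P.Fts (↑t) x}) ≤ κ := by
    refine le_trans (Cardinal.mk_iUnion_le _) ?_
    have htr : Cardinal.mk ↥P.tr ≤ Cardinal.aleph0 := by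
      have := hfin.to_subtype
      exact le_of_lt (Cardinal.lt_aleph0_of_finite _)
    have hsup : (⨆ t : ↥P.tr, Cardinal.mk ↥{x | 0 < P.Fts (↑t) x}) ≤ Cardinal.aleph0 := by
      apply ciSup_le'
      intro t
      have := (hP.post_fin (↑t) t.2).to_subtype
      exact le_of_lt (Cardinal.lt_aleph0_of_finite _)
    calc Cardinal.mk ↥P.tr * (⨆ t : ↥P.tr, Cardinal.mk ↥{x | 0 < P.Fts (↑t) x})
        ≤ Cardinal.aleph0 * Cardinal.aleph0 := mul_le_mul' htr hsup
      _ = Cardinal.aleph0 := Cardinal.aleph0_mul_aleph0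
      _ ≤ κ := hκinf
  have hple : Cardinal.mk ↥P.pl ≤ κ := by
    refine le_trans (Cardinal.mk_le_mk_of_subset hsub) ?_
    refine le_trans (Cardinal.mk_union_le _ _) ?_
    calc _ ≤ κ + κ := add_le_add hb1 hb2
      _ = κ := Cardinal.add_eq_self hκinf
  rw [hAmb]
  exact lt_of_le_of_lt hple (Cardinal.cantor κ)

lemma oneSwap_of_iso {A B : RawProc N} (hA : IsProc N A) (hB : IsProc N B) {p : N.Amb}
    (hp : p ∈ A.pl) (hiso : Iso N A B) : OneSwap N A B :=
  ⟨hA, hB, p, p, ⟨hp, hp, rfl, hA.acyclic _, hA.acyclic _⟩, by rw [swap_self]; exact hiso⟩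

lemma oneSwap_finite {A B : RawProc N} (h : OneSwap N A B) : A.FiniteP ↔ B.FiniteP := by
  obtain ⟨hA, hB, p, q, hsw, fp, ft, hbp, hbt, -⟩ := h
  constructor
  · intro hfin
    show B.tr.Finite
    rw [show B.tr = ft '' (A.swap p q).tr from hbt.image_eq.symm]
    exact Set.Finite.image _ (show (A.swap p q).tr.Finite from hfin)
  · intro hfin
    show A.tr.Finite
    have himg : (ft '' (A.swap p q).tr).Finite := by
      rw [hbt.image_eq]
      exact hfin
    exact Set.Finite.of_finite_image himg hbt.injOn

open scoped Classical in
lemma commute_swap_prefix {A B X : RawProc N} (hAfin : A.FiniteP) (hXp : IsProc N X)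
    (hXfin : X.FiniteP) (hos : OneSwap N A B) (hpre : ProcPrefix N B X) :
    ∃ X', IsProc N X' ∧ X'.FiniteP ∧ ProcPrefix N A X' ∧ SwapEqv N X' X := by
  obtain ⟨hA, hB, p, q, hsw, fp, ft, hbp, hbt, hflow, hinit, hpiS, hpiT⟩ := hos
  haveI := amb_infinite N
  set eS : ↥A.pl ≃ ↥B.pl := Set.BijOn.equiv fp hbp with heS
  set eT : ↥A.tr ≃ ↥B.tr := Set.BijOn.equiv ft hbt with heT
  have ecoeS : ∀ z : ↥A.pl, ((eS z : ↥B.pl) : N.Amb) = fp ↑z := fun z => rfl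
  have ecoeT : ∀ z : ↥A.tr, ((eT z : ↥B.tr) : N.Amb) = ft ↑z := fun z => rfl
  have hsA : Cardinal.mk ↥A.pl < Cardinal.mk N.Amb := pl_small hA hAfin
  have hsB : Cardinal.mk ↥B.pl < Cardinal.mk N.Amb := by
    rwa [← Cardinal.mk_congr eS]
  have htA : Cardinal.mk ↥A.tr < Cardinal.mk N.Amb := finite_small hAfin
  have htB : Cardinal.mk ↥B.tr < Cardinal.mk N.Amb := by
    rwa [← Cardinal.mk_congr eT]
  obtain ⟨σS, hσS1, hσS2⟩ := exists_perm_extend hsB hsA eS.symm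
  obtain ⟨σT, hσT1, hσT2⟩ := exists_perm_extend htB htA eT.symm
  -- basic facts about σS, σT
  have F1 : ∀ x (h : x ∈ A.pl), σS.symm x = fp x := by
    intro x h
    rw [hσS2 x h, Equiv.symm_symm, ecoeS]
  have F1T : ∀ t (h : t ∈ A.tr), σT.symm t = ft t := by
    intro t h
    rw [hσT2 t h, Equiv.symm_symm, ecoeT]
  set W := rename σS σT X with hW
  have hWproc : IsProc N (rename σS σT X) := isProc_rename hXp σS σT
  have hWfin : (rename σS σT X).FiniteP := rename_finite hXfin σS σT
  have hplW : A.pl ⊆ (rename σS σT X).pl := by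
    intro x hx
    show x ∈ ⇑σS '' X.pl
    rw [Set.mem_image_equiv, F1 x hx]
    exact hpre.1 (hbp.mapsTo hx)
  have htrW : A.tr ⊆ (rename σS σT X).tr := by
    intro t ht
    show t ∈ ⇑σT '' X.tr
    rw [Set.mem_image_equiv, F1T t ht]
    exact hpre.2.1 (hbt.mapsTo ht)
  have hswproc : IsProc N (A.swap p q) := isProc_swap hA hsw
  have hpre1 : ProcPrefix N (A.swap p q) (rename σS σT X) := by
    refine ⟨hplW, htrW, ?_, ?_, ?_, ?_⟩
    · intro x hx t ht
      have hfx : fp x ∈ B.pl := hbp.mapsTo hx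
      have hft : ft t ∈ B.tr := hbt.mapsTo ht
      have e1 := (hpre.2.2.1 (fp x) hfx (ft t) hft)
      have e2 := hflow x hx t ht
      constructor
      · show (A.swap p q).Fst x t = X.Fst (σS.symm x) (σT.symm t)
        rw [F1 x hx, F1T t ht, ← e1.1, e2.1]
      · show (A.swap p q).Fts t x = X.Fts (σT.symm t) (σS.symm x)
        rw [F1 x hx, F1T t ht, ← e1.2, e2.2]
    · intro x hx
      have hfx : fp x ∈ B.pl := hbp.mapsTo hx
      show (A.swap p q).piS x = X.piS (σS.symm x)
      rw [F1 x hx, ← hpre.2.2.2.1 (fp x) hfx, hpiS x hx]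
    · intro t ht
      have hft : ft t ∈ B.tr := hbt.mapsTo ht
      show (A.swap p q).piT t = X.piT (σT.symm t)
      rw [F1T t ht, ← hpre.2.2.2.2.1 (ft t) hft, hpiT t ht]
    · show A.init = (rename σS σT X).init
      rw [rename_init, ← hpre.2.2.2.2.2]
      ext x
      rw [Set.mem_image_equiv]
      constructor
      · intro hx
        have hxpl : x ∈ A.pl := hx.1
        have hx' : x ∈ (A.swap p q).init := hx
        rw [F1 x hxpl]
        exact (hinit x hxpl).1 hx'
      · intro hx
        have hxB : σS.symm x ∈ B.pl := hx.1
        have hximg : x ∈ ⇑σS '' B.pl := Set.mem_image_equiv.2 hxB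
        obtain ⟨y, hy, rfl⟩ := hximg
        have hyA : (σS y : N.Amb) ∈ A.pl := by
          have := hσS1 y hy
          rw [this]
          exact (eS.symm ⟨y, hy⟩).2
        have hfpy : fp (σS y) = y := by
          have h1 := hσS1 y hy
          have : σS.symm (σS y) = y := σS.symm_apply_apply y
          rw [F1 _ hyA] at this
          exact this
        rw [F1 _ hyA, hfpy] at hx
        have h5 : fp (σS y) ∈ B.init := by rw [hfpy]; exact hx
        have : (σS y : N.Amb) ∈ (A.swap p q).init := (hinit _ hyA).2 h5
        exact this
  have hswW : Swappable (rename σS σT X) p q := by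
    refine ⟨hplW hsw.1, hplW hsw.2.1, ?_, ?_, ?_⟩
    · rw [← hpre1.2.2.2.1 p hsw.1, ← hpre1.2.2.2.1 q hsw.2.1]
      exact hsw.2.2.1
    · intro h
      have := (prefix_causal_closed hswproc hWproc hpre1 h
        (show InProc (A.swap p q) (Sum.inl q) from hsw.2.1)).2
      exact swap_not_causal hA hsw (by simp) (by simp) this
    · intro h
      have := (prefix_causal_closed hswproc hWproc hpre1 h
        (show InProc (A.swap p q) (Sum.inl p) from hsw.1)).2
      exact swap_not_causal hA hsw (by simp) (by simp) this
  set W' := (rename σS σT X).swap p q with hW'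
  have hW'proc : IsProc N W' := isProc_swap hWproc hswW
  have hW'fin : W'.FiniteP := hWfin
  have hmem : ∀ x ∈ A.pl, Equiv.swap p q x ∈ A.pl := by
    intro x hx
    by_cases h1 : x = p
    · subst h1; rw [Equiv.swap_apply_left]; exact hsw.2.1
    by_cases h2 : x = q
    · subst h2; rw [Equiv.swap_apply_right]; exact hsw.1
    rwa [Equiv.swap_apply_of_ne_of_ne h1 h2]
  have hpre2 : ProcPrefix N A W' := by
    refine ⟨hplW, htrW, ?_, ?_, ?_, ?_⟩
    · intro x hx t ht
      constructor
      · rw [show W'.Fst x t = (rename σS σT X).Fst (Equiv.swap p q x) t from swap_Fst _ p q x t,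
          ← (hpre1.2.2.1 (Equiv.swap p q x) (hmem x hx) t ht).1,
          swap_Fst, Equiv.swap_apply_self]
      · rw [show W'.Fts t x = (rename σS σT X).Fts t x from rfl,
          ← (hpre1.2.2.1 x hx t ht).2]
        rfl
    · intro x hx
      rw [show W'.piS x = (rename σS σT X).piS x from rfl, ← hpre1.2.2.2.1 x hx]
      rfl
    · intro t ht
      rw [show W'.piT t = (rename σS σT X).piT t from rfl, ← hpre1.2.2.2.2.1 t ht]
      rfl
    · rw [show W'.init = (rename σS σT X).init from rfl, ← hpre1.2.2.2.2.2]
      rfl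
  have step1 : OneSwap N W' (rename σS σT X) :=
    ⟨hW'proc, hWproc, p, q, swappable_swap hWproc hswW, by
      rw [show W'.swap p q = (rename σS σT X) from swap_swap _ p q]
      exact iso_refl _⟩
  have step2 : OneSwap N (rename σS σT X) X :=
    oneSwap_of_iso hWproc hXp (hplW hsw.1) (iso_rename σS σT X)
  exact ⟨W', hW'proc, hW'fin, hpre2,
    Relation.ReflTransGen.head step1 (Relation.ReflTransGen.single step2)⟩

lemma bd_char {Q R : RawProc N} (hQbd : BDapprox N Q R) :
    ∃ X Y : RawProc N, IsProc N X ∧ X.FiniteP ∧ IsProc N Y ∧ Y.FiniteP ∧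
      ProcPrefix N R X ∧ SwapEqv N X Y ∧ ProcPrefix N Y Q := by
  induction hQbd with
  | base R hR hRf hpre =>
    exact ⟨R, R, hR, hRf, hR, hRf, prefix_refl R, Relation.ReflTransGen.refl, hpre⟩
  | swapc A B hBbd hA hAf hos ih =>
    obtain ⟨X, Y, hX, hXf, hY, hYf, hpre, heqv, hpreQ⟩ := ih
    obtain ⟨X', hX', hX'f, hpre', heqv'⟩ := commute_swap_prefix hAf hX hXf hos hpre
    exact ⟨X', Y, hX', hX'f, hY, hYf, hpre', heqv'.trans heqv, hpreQ⟩
  | prefc A B hBbd hA hAf hpre ih =>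
    obtain ⟨X, Y, hX, hXf, hY, hYf, hpreX, heqv, hpreQ⟩ := ih
    exact ⟨X, Y, hX, hXf, hY, hYf, prefix_trans hpre hpreX, heqv, hpreQ⟩

lemma bd_mono {P Q : RawProc N} (hle : SwapLe N P Q) :
    ∀ R, BDapprox N P R → BDapprox N Q R := by
  intro R hbd
  induction hbd with
  | base R hR hRf hpre =>
    obtain ⟨P', Q', hP', hP'f, hQ', hQ'f, hpre1, heqv, hpre2⟩ := hle R hR hRf hpre
    have hQ'bd : BDapprox N Q Q' := BDapprox.base Q' hQ' hQ'f hpre2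
    have back : ∀ A : RawProc N, SwapEqv N A Q' → A.FiniteP → BDapprox N Q A := by
      intro A heqv
      induction heqv using Relation.ReflTransGen.head_induction_on with
      | refl => intro _; exact hQ'bd
      | head hos hrest ih =>
        rename_i A' C
        intro hAfin
        have hCfin : C.FiniteP := (oneSwap_finite hos).1 hAfin
        exact BDapprox.swapc A' C (ih hCfin) hos.1 hAfin hos
    exact BDapprox.prefc R P' (back P' heqv hP'f) hR hRf hpre1
  | swapc A B hBbd hA hAf hos ih => exact BDapprox.swapc A B ih hA hAf hos
  | prefc A B hBbd hA hAf hpre ih => exact BDapprox.prefc A B ih hA hAf hpre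

lemma bd_to_le {P Q : RawProc N} (h : ∀ R, BDapprox N P R → BDapprox N Q R) :
    SwapLe N P Q := by
  intro P'' hP'' hfin hpre
  exact bd_char (h P'' (BDapprox.base P'' hP'' hfin hpre))

end Aux

/-- `P ⊑₁^∞ Q` iff `BD(P) ⊆ BD(Q)`, where `BD(P)` is the set of finite
BD-approximations of `P`; consequently `P ≡₁^∞ Q` iff `BD(P) = BD(Q)`. -/
theorem swapLe_iff_BDapprox (N : Net) (P Q : RawProc N)
    (hP : IsProc N P) (hQ : IsProc N Q) :
    (SwapLe N P Q ↔ ∀ R, BDapprox N P R → BDapprox N Q R) ∧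
    ((SwapLe N P Q ∧ SwapLe N Q P) ↔ ∀ R, (BDapprox N P R ↔ BDapprox N Q R)) := by
  constructor
  · exact ⟨fun h => bd_mono h, fun h => bd_to_le h⟩
  · constructor
    · rintro ⟨h1, h2⟩ R
      exact ⟨bd_mono h1 R, bd_mono h2 R⟩
    · intro h
      exact ⟨bd_to_le (fun R hr => (h R).1 hr), bd_to_le (fun R hr => (h R).2 hr)⟩
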